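/- Let s, t ∈ (0,1) with 2s + 2t > 3, 2*_s = 6/(3-2s), 2 < q < 2*_s, δ_{q,s} = 3(q-2)/(2qs), and λ, μ, s > 0. Let A, B, C, D > 0 be real numbers satisfying sA + ((3-2t)/4)λB - μsδ_{q,s}C - sD = 0 (criticality of the fiber map). Then 2s²A + ((3-2t)²/4)λB - μqs²δ_{q,s}²C - 2*_s s² D < 0. -/
import Mathlib


theorem stmt_14 (s t q lam μ A B C D : ℝ)
    (hs0 : 0 < s) (hs1 : s < 1) (ht0 : 0 < t) (ht1 : t < 1)
    (hst : 2*s + 2*t > 3) (hq2 : 2 + 4*s/3 < q) (hqc : q < 6/(3-2*s))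
    (hlam : 0 < lam) (hμ : 0 < μ)
    (hA : 0 < A) (hB : 0 < B) (hC : 0 < C) (hD : 0 < D)
    (hcrit : s * A + (3-2*t)/4 * lam * B - μ * s * (3*(q-2)/(2*q*s)) * C - s * D = 0) :
    2*s^2 * A + (3-2*t)^2/4 * lam * B - μ * q * s^2 * (3*(q-2)/(2*q*s))^2 * C
      - (6/(3-2*s)) * s^2 * D < 0 := by
  set δ := 3*(q-2)/(2*q*s) with hδdef
  have hq0 : (0:ℝ) < q := by linarith
  have hδ0 : 0 < δ := by
    apply div_pos <;> nlinarith
  have hqδ : 2 < q * δ := by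
    have hqd : q * δ = 3*(q-2)/(2*s) := by
      rw [hδdef]; field_simp
    rw [hqd, lt_div_iff₀ (by linarith)]
    nlinarith
  have h3s : 0 < 3 - 2*s := by linarith
  have hcr : 2 < 6/(3-2*s) := by
    rw [lt_div_iff₀ h3s]; linarith
  have key : 2*s^2*A + (3-2*t)^2/4*lam*B - μ*q*s^2*δ^2*C - (6/(3-2*s))*s^2*D
      = 2*s*(s*A + (3-2*t)/4*lam*B - μ*s*δ*C - s*D)
        + (3-2*t)*((3-2*t)-2*s)/4*lam*B + μ*s^2*δ*(2 - q*δ)*C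
        + (2 - 6/(3-2*s))*s^2*D := by ring
  rw [key, hcrit]
  have h1 : (3-2*t)*((3-2*t)-2*s)/4*lam*B < 0 := by
    apply mul_neg_of_neg_of_pos _ hB
    apply mul_neg_of_neg_of_pos _ hlam
    have : 0 < 3 - 2*t := by linarith
    have : (3-2*t)-2*s < 0 := by linarith
    nlinarith
  have h2 : μ*s^2*δ*(2 - q*δ)*C < 0 := by
    apply mul_neg_of_neg_of_pos _ hC
    have h : 2 - q*δ < 0 := by linarith
    exact mul_neg_of_pos_of_neg (mul_pos (mul_pos hμ (pow_pos hs0 2)) hδ0) h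
  have h3 : (2 - 6/(3-2*s))*s^2*D < 0 := by
    apply mul_neg_of_neg_of_pos _ hD
    apply mul_neg_of_neg_of_pos _ (by positivity)
    linarith
  linarith
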